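/- arXiv:1307.4845 — 6 statements merged into one kernel-verified Lean document; each statement's English description precedes it below -/
import Mathlib

section
/- Let B be a topological group and let A be a subgroup of B equipped with a topology making A a topological group and such that the inclusion map A → B is continuous. Then the following two conditions are equivalent: (I) A is a normal subgroup of B and the map φ : A × B → A defined by φ(a,b) = b⁻¹ a b is continuous (where A carries its given topology); (II) for every open subset U of A: (a) for each b ∈ B the set bUb⁻¹ is contained in A and is an open subset of A, and (b) for each a ∈ U there exist an open subset V of B with 1 ∈ V and an open subset U_a of A with a ∈ U_a such that for every b ∈ V one has b⁻¹ U_a b ⊆ U. -/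
open Topology

/-!
A right action `φ` of a topological group on a space is jointly continuous as soon as each map
`φ (·, b)` is continuous and `φ` is continuous at every point `(x, 1)`: near `(a, b)` one writes
`φ (x, y) = φ (φ (x, b), b⁻¹ * y)`. For conjugation `φ (a, b) = b⁻¹ * a * b` on a normal subgroup,
condition (II)(a) says exactly that the maps `φ (·, b)` are continuous, and (II)(b) that `φ` is
continuous at the points `(a, 1)`; normality itself is (II)(a) for `U = univ`.
-/

section RightAction

variable {X G : Type*} [TopologicalSpace X] [TopologicalSpace G]

theorem continuous_rightAction_of_continuousAt_one [Group G] [ContinuousMul G] (φ : X × G → X)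
    (hact : ∀ x b c, φ (φ (x, b), c) = φ (x, b * c))
    (hsec : ∀ b, Continuous fun x => φ (x, b)) (hcont_one : ∀ x, ContinuousAt φ (x, 1)) :
    Continuous φ := by
  refine continuous_iff_continuousAt.2 fun ⟨a, b⟩ => ?_
  have hshift : φ = fun p => φ (φ (p.1, b), b⁻¹ * p.2) := by
    ext1 p
    rw [hact, mul_inv_cancel_left]
  rw [hshift]
  refine ContinuousAt.comp (g := φ) ?_ ?_
  · simpa only [inv_mul_cancel] using hcont_one (φ (a, b))
  · exact (((hsec b).comp continuous_fst).prodMk (continuous_const.mul continuous_snd)).continuousAt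

theorem forall_continuousAt_one_iff [One G] (φ : X × G → X) (hone : ∀ x, φ (x, 1) = x) :
    (∀ x, ContinuousAt φ (x, 1)) ↔
      ∀ U : Set X, IsOpen U → ∀ a ∈ U, ∃ V : Set G, IsOpen V ∧ (1 : G) ∈ V ∧
        ∃ Ua : Set X, IsOpen Ua ∧ a ∈ Ua ∧ ∀ b ∈ V, Ua ⊆ (fun x => φ (x, b)) ⁻¹' U := by
  constructor
  · intro hcont U hU a ha
    have hpre : φ ⁻¹' U ∈ 𝓝 (a, 1) := hcont a (hU.mem_nhds (by rwa [hone]))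
    obtain ⟨Ua, V, hUa, haUa, hV, h1V, hprod⟩ := mem_nhds_prod_iff'.1 hpre
    exact ⟨V, hV, h1V, Ua, hUa, haUa, fun b hb x hx => hprod ⟨hx, hb⟩⟩
  · intro h x
    refine (nhds_basis_opens _).tendsto_right_iff.2 fun U ⟨hxU, hU⟩ => ?_
    rw [hone] at hxU
    obtain ⟨V, hV, h1V, Ua, hUa, hxUa, hsub⟩ := h U hU x hxU
    exact mem_nhds_prod_iff'.2 ⟨Ua, V, hUa, hxUa, hV, h1V, fun p ⟨hp1, hp2⟩ => hsub p.2 hp2 hp1⟩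

end RightAction

namespace Subgroup

variable {B : Type*} [Group B] {A : Subgroup B} (φ : A × B → A)
  (hφ : ∀ p : A × B, (φ p : B) = p.2⁻¹ * (p.1 : B) * p.2)
include hφ

theorem conj_apply_conj (x : A) (b c : B) : φ (φ (x, b), c) = φ (x, b * c) := by
  ext
  simp only [hφ, mul_inv_rev, mul_assoc]

theorem conj_apply_one (x : A) : φ (x, 1) = x := by
  ext
  simp [hφ]

theorem setOf_mem_conj_image_eq_preimage (b : B) (U : Set A) :
    {x : A | (x : B) ∈ (fun u : A => b * (u : B) * b⁻¹) '' U} = (fun x => φ (x, b)) ⁻¹' U := by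
  ext x
  have hconj : ∀ u : A, b * (u : B) * b⁻¹ = x ↔ u = φ (x, b) := fun u => by
    rw [Subtype.ext_iff, hφ]
    constructor
    · rintro h
      rw [← h]
      group
    · rintro h
      rw [h]
      group
  simp only [Set.mem_ofPred_eq, Set.mem_image, hconj, exists_eq_right, Set.mem_preimage]

theorem conj_image_subset_val_image_iff (b : B) (S U : Set A) :
    (fun u : A => b⁻¹ * (u : B) * b) '' S ⊆ Subtype.val '' U ↔
      S ⊆ (fun x => φ (x, b)) ⁻¹' U := by
  simp only [Set.image_subset_iff]
  refine forall₂_congr fun s _ => ?_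
  rw [Set.mem_preimage, Set.mem_preimage, ← Subtype.val_injective.mem_set_image, hφ]

end Subgroup

theorem stmt0_general {B : Type*} [Group B] [TopologicalSpace B] [IsTopologicalGroup B]
    (A : Subgroup B) (tA : TopologicalSpace A) :
    (A.Normal ∧ ∀ φ : A × B → A,
        (∀ p : A × B, (φ p : B) = p.2⁻¹ * (p.1 : B) * p.2) →
        Continuous[@instTopologicalSpaceProd A B tA inferInstance, tA] φ) ↔
    (∀ U : Set A, IsOpen[tA] U →
      ((∀ b : B, (fun u : A => b * (u : B) * b⁻¹) '' U ⊆ (A : Set B) ∧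
          IsOpen[tA] {x : A | (x : B) ∈ (fun u : A => b * (u : B) * b⁻¹) '' U}) ∧
        (∀ a ∈ U, ∃ V : Set B, IsOpen V ∧ (1 : B) ∈ V ∧
          ∃ Ua : Set A, IsOpen[tA] Ua ∧ a ∈ Ua ∧
            ∀ b ∈ V, (fun u : A => b⁻¹ * (u : B) * b) '' Ua ⊆ Subtype.val '' U))) := by
  let := tA
  constructor
  · rintro ⟨hA, hcont⟩
    let φ : A × B → A := fun p => ⟨p.2⁻¹ * p.1 * p.2, by simpa using hA.conj_mem _ p.1.2 p.2⁻¹⟩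
    have hφ : ∀ p : A × B, (φ p : B) = p.2⁻¹ * (p.1 : B) * p.2 := fun _ => rfl
    have hφc : Continuous φ := hcont φ hφ
    have hone := (forall_continuousAt_one_iff φ (Subgroup.conj_apply_one φ hφ)).1
      fun x => hφc.continuousAt
    intro U hU
    refine ⟨fun b => ⟨?_, ?_⟩, fun a ha => ?_⟩
    · rintro _ ⟨u, -, rfl⟩
      exact hA.conj_mem _ u.2 b
    · rw [Subgroup.setOf_mem_conj_image_eq_preimage φ hφ]
      exact (hφc.comp (continuous_id.prodMk continuous_const)).isOpen_preimage U hU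
    · simpa only [Subgroup.conj_image_subset_val_image_iff φ hφ] using hone U hU a ha
  · intro h
    have hA : A.Normal := ⟨fun n hn g => ((h Set.univ isOpen_univ).1 g).1 ⟨⟨n, hn⟩, trivial, rfl⟩⟩
    refine ⟨hA, fun φ hφ => continuous_rightAction_of_continuousAt_one φ (Subgroup.conj_apply_conj φ hφ)
      (fun b => continuous_def.2 fun U hU => ?_)
      ((forall_continuousAt_one_iff φ (Subgroup.conj_apply_one φ hφ)).2 fun U hU a ha => ?_)⟩
    · rw [← Subgroup.setOf_mem_conj_image_eq_preimage φ hφ]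
      exact ((h U hU).1 b).2
    · simpa only [Subgroup.conj_image_subset_val_image_iff φ hφ] using (h U hU).2 a ha

/-- For a subgroup `A` of a topological group `B`, carrying its own group topology `tA`
with continuous inclusion into `B`, the following are equivalent:
(I) `A` is normal in `B` and the conjugation map `φ : A × B → A`, `(a, b) ↦ b⁻¹ * a * b`,
is continuous;
(II) for every `tA`-open `U ⊆ A`: (a) for each `b : B` the set `bUb⁻¹` is contained in `A`
and is open in `A`, and (b) for each `a ∈ U` there are an open `V ⊆ B` with `1 ∈ V` and a
`tA`-open `U_a ⊆ A` with `a ∈ U_a` such that `b⁻¹ U_a b ⊆ U` for all `b ∈ V`. -/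
theorem stmt0 {B : Type*} [Group B] [TopologicalSpace B] [IsTopologicalGroup B]
    (A : Subgroup B) (tA : TopologicalSpace A)
    (_ : @IsTopologicalGroup A tA _)
    (hincl : Continuous[tA, inferInstance] (fun a : A => (a : B))) :
    (A.Normal ∧ ∀ φ : A × B → A,
        (∀ p : A × B, (φ p : B) = p.2⁻¹ * (p.1 : B) * p.2) →
        Continuous[@instTopologicalSpaceProd A B tA inferInstance, tA] φ) ↔
    (∀ U : Set A, IsOpen[tA] U →
      ((∀ b : B, (fun u : A => b * (u : B) * b⁻¹) '' U ⊆ (A : Set B) ∧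
          IsOpen[tA] {x : A | (x : B) ∈ (fun u : A => b * (u : B) * b⁻¹) '' U}) ∧
        (∀ a ∈ U, ∃ V : Set B, IsOpen V ∧ (1 : B) ∈ V ∧
          ∃ Ua : Set A, IsOpen[tA] Ua ∧ a ∈ Ua ∧
            ∀ b ∈ V, (fun u : A => b⁻¹ * (u : B) * b) '' Ua ⊆ Subtype.val '' U))) :=
  stmt0_general A tA
end

section
/- Let B be a topological group and let A be a subgroup of B equipped with a topology making A a topological group and such that the inclusion map A → B is continuous. Let X be a topological group, f : X → B an injective continuous group homomorphism, and U a normal subgroup of X, equipped with a topology making it a topological group, such that f restricts to an isomorphism of topological groups from U onto A and such that the conjugation map U × X → U, (u,x) ↦ x⁻¹ u x, is continuous. Then the image f(X) is contained in the subgroup N = { b ∈ B | for every open subset U' of A, both bU'b⁻¹ and b⁻¹U'b are contained in A and are open subsets of A }. -/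
open Topology

/-!
Conjugation by `f x` on `A` is the transport along `e` of conjugation by `x` on `U`. The
continuity of `(u, x) ↦ x⁻¹ u x` makes conjugation by `x` (with inverse conjugation by `x⁻¹`) a
homeomorphism of `U`, hence conjugation by `f x` is a homeomorphism of `A`, which maps open
subsets of `A` onto open subsets of `A`.
-/

section ConjugationHomeomorph

variable {X : Type*} [Group X] {U : Subgroup X} [U.Normal] [TopologicalSpace U]

theorem continuous_conjNormal_of_continuous_conj [TopologicalSpace X]
    (hconj : ∀ ψ : U × X → U, (∀ p : U × X, (ψ p : X) = p.2⁻¹ * (p.1 : X) * p.2) → Continuous ψ)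
    (x : X) : Continuous (MulAut.conjNormal x : U → U) := by
  have hψ := hconj (fun p => (MulAut.conjNormal p.2).symm p.1) fun p =>
    MulAut.conjNormal_symm_apply p.2 p.1
  convert hψ.comp (Continuous.prodMk_left x⁻¹) using 1
  ext u
  simp [MulAut.conjNormal_apply]

def conjNormalHomeomorph (hcont : ∀ x : X, Continuous (MulAut.conjNormal x : U → U)) (x : X) :
    U ≃ₜ U where
  toEquiv := (MulAut.conjNormal x).toEquiv
  continuous_toFun := hcont x
  continuous_invFun := by simpa using hcont x⁻¹

theorem exists_homeomorph_coe_eq_conj {B : Type*} [Group B] {A : Subgroup B} [TopologicalSpace A]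
    (f : X →* B) (e : U ≃* A) (he : ∀ u : U, ((e u : A) : B) = f u)
    (hecont : Continuous e) (hesymm : Continuous e.symm)
    (hcont : ∀ x : X, Continuous (MulAut.conjNormal x : U → U)) (x : X) :
    ∃ φ : A ≃ₜ A, ∀ a : A, (φ a : B) = f x * a * (f x)⁻¹ := by
  let eₜ : U ≃ₜ A := ⟨e.toEquiv, hecont, hesymm⟩
  refine ⟨(eₜ.symm.trans (conjNormalHomeomorph hcont x)).trans eₜ, fun a => ?_⟩
  have hfa : f (e.symm a) = a := by rw [← he, e.apply_symm_apply]
  simp [eₜ, conjNormalHomeomorph, he, MulAut.conjNormal_apply, hfa]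

end ConjugationHomeomorph

theorem Subgroup.image_conj_subset_and_isOpen {B : Type*} [Group B] {A : Subgroup B}
    [TopologicalSpace A] {b : B} (φ : A ≃ₜ A) (hφ : ∀ a : A, (φ a : B) = b * a * b⁻¹)
    {U' : Set A} (hU' : IsOpen U') :
    (fun u : A => b * (u : B) * b⁻¹) '' U' ⊆ (A : Set B) ∧
      IsOpen {x : A | (x : B) ∈ (fun u : A => b * (u : B) * b⁻¹) '' U'} := by
  have himage : (fun u : A => b * (u : B) * b⁻¹) '' U' = (↑) '' (φ '' U') := by
    rw [Set.image_image]
    simp only [hφ]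
  rw [himage]
  refine ⟨Subtype.coe_image_subset _ _, ?_⟩
  simpa only [Subtype.val_injective.mem_set_image, Set.ofPred_mem_eq] using φ.isOpenMap U' hU'

theorem stmt2_general {B : Type*} [Group B]
    (A : Subgroup B) (tA : TopologicalSpace A)
    {X : Type*} [Group X] [TopologicalSpace X]
    (f : X →* B)
    (U : Subgroup X) (hU : U.Normal) (tU : TopologicalSpace U)
    (e : U ≃* A)
    (he : ∀ u : U, ((e u : A) : B) = f u)
    (hecont : Continuous[tU, tA] e)
    (hesymm : Continuous[tA, tU] e.symm)
    (hconj : ∀ ψ : U × X → U,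
      (∀ p : U × X, (ψ p : X) = p.2⁻¹ * (p.1 : X) * p.2) →
      Continuous[@instTopologicalSpaceProd U X tU inferInstance, tU] ψ) :
    Set.range f ⊆
      {b : B | ∀ U' : Set A, IsOpen[tA] U' →
        ((fun u : A => b * (u : B) * b⁻¹) '' U' ⊆ (A : Set B) ∧
          IsOpen[tA] {x : A | (x : B) ∈ (fun u : A => b * (u : B) * b⁻¹) '' U'}) ∧
        ((fun u : A => b⁻¹ * (u : B) * b) '' U' ⊆ (A : Set B) ∧
          IsOpen[tA] {x : A | (x : B) ∈ (fun u : A => b⁻¹ * (u : B) * b) '' U'})} := by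
  let := tA
  let := tU
  rintro _ ⟨x, rfl⟩ U' hU'
  have hcont := continuous_conjNormal_of_continuous_conj hconj
  obtain ⟨φ, hφ⟩ := exists_homeomorph_coe_eq_conj f e he hecont hesymm hcont x
  obtain ⟨φ', hφ'⟩ := exists_homeomorph_coe_eq_conj f e he hecont hesymm hcont x⁻¹
  rw [map_inv] at hφ'
  exact ⟨Subgroup.image_conj_subset_and_isOpen φ hφ hU', by
    simpa only [inv_inv] using Subgroup.image_conj_subset_and_isOpen φ' hφ' hU'⟩

/-- Let `A` be a subgroup of a topological group `B`, carrying its own group topology `tA`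
with continuous inclusion into `B`. Let `X` be a topological group, `f : X → B` an injective
continuous homomorphism, `U` a normal subgroup of `X` carrying its own group topology `tU`,
such that `f` restricts to an isomorphism of topological groups `U ≅ A` and such that the
conjugation map `U × X → U`, `(u, x) ↦ x⁻¹ * u * x`, is continuous. Then the image of `f` is
contained in the set
`N = { b ∈ B | for every tA-open U' ⊆ A, both bU'b⁻¹ and b⁻¹U'b are contained in A and are
open subsets of A }`. -/
theorem stmt2 {B : Type*} [Group B] [TopologicalSpace B] [IsTopologicalGroup B]
    (A : Subgroup B) (tA : TopologicalSpace A)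
    (_ : @IsTopologicalGroup A tA _)
    (hincl : Continuous[tA, inferInstance] (fun a : A => (a : B)))
    {X : Type*} [Group X] [TopologicalSpace X] [IsTopologicalGroup X]
    (f : X →* B) (hfinj : Function.Injective f) (hfcont : Continuous f)
    (U : Subgroup X) (hU : U.Normal) (tU : TopologicalSpace U)
    (_ : @IsTopologicalGroup U tU _)
    (e : U ≃* A)
    (he : ∀ u : U, ((e u : A) : B) = f u)
    (hecont : Continuous[tU, tA] e)
    (hesymm : Continuous[tA, tU] e.symm)
    (hconj : ∀ ψ : U × X → U,
      (∀ p : U × X, (ψ p : X) = p.2⁻¹ * (p.1 : X) * p.2) →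
      Continuous[@instTopologicalSpaceProd U X tU inferInstance, tU] ψ) :
    Set.range f ⊆
      {b : B | ∀ U' : Set A, IsOpen[tA] U' →
        ((fun u : A => b * (u : B) * b⁻¹) '' U' ⊆ (A : Set B) ∧
          IsOpen[tA] {x : A | (x : B) ∈ (fun u : A => b * (u : B) * b⁻¹) '' U'}) ∧
        ((fun u : A => b⁻¹ * (u : B) * b) '' U' ⊆ (A : Set B) ∧
          IsOpen[tA] {x : A | (x : B) ∈ (fun u : A => b⁻¹ * (u : B) * b) '' U'})} :=
  stmt2_general A tA f U hU tU e he hecont hesymm hconj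
end

section
/- Let B be a topological group and let A be a subgroup of B equipped with a topology making A a topological group and such that the inclusion map A → B is continuous. Assume that for every open subset U of A and each a ∈ U there exist an open subset V of B with 1 ∈ V and an open subset U_a of A with a ∈ U_a such that b⁻¹ U_a b ⊆ U for every b ∈ V. Let N = { b ∈ B | for every open subset U of A, both bUb⁻¹ and b⁻¹Ub are contained in A and are open subsets of A }, endowed with the subspace topology inherited from B. Then A ⊆ N, A is a normal subgroup of N, and the map A × N → A, (a,n) ↦ n⁻¹ a n, is continuous (where A carries its given topology). -/
/-!
Conjugation by an element of `A` is a homeomorphism of `A`, so `A ⊆ N`, and normality is the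
case `U = A`. For continuity at `(a, n)`, apply condition (b) to `n⁻¹ a n`: points near `(a, n)`
have the form `(n u n⁻¹, n v)` with `u ∈ Uₐ` and `v ∈ V`, and `(n v)⁻¹ (n u n⁻¹) (n v) = v⁻¹ u v`.
-/

open Topology

section

variable {B : Type*} [Group B] {A : Subgroup B}

theorem Subgroup.setOf_coe_mem_conj_image (g : A) (U : Set A) :
    {x : A | (x : B) ∈ (fun u : A => (g : B) * u * (g : B)⁻¹) '' U} =
      (fun x : A => g⁻¹ * x * g) ⁻¹' U := by
  ext x
  constructor
  · rintro ⟨u, hu, hx⟩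
    have : u = g⁻¹ * x * g := Subtype.ext (by simp [← hx, mul_assoc])
    simpa [this] using hu
  · intro hx
    exact ⟨_, hx, by simp [mul_assoc]⟩

theorem Subgroup.conj_image_subset {b : B} (hb : b ∈ A) (U : Set A) :
    (fun u : A => b * (u : B) * b⁻¹) '' U ⊆ A := by
  rintro _ ⟨u, -, rfl⟩
  exact A.mul_mem (A.mul_mem hb u.2) (A.inv_mem hb)

theorem Subgroup.isOpen_setOf_coe_mem_conj_image [TopologicalSpace A] [IsTopologicalGroup A]
    {b : B} (hb : b ∈ A) {U : Set A} (hU : IsOpen U) :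
    IsOpen {x : A | (x : B) ∈ (fun u : A => b * (u : B) * b⁻¹) '' U} := by
  lift b to A using hb
  rw [setOf_coe_mem_conj_image]
  exact hU.preimage (by fun_prop)

theorem Subgroup.continuous_conj_of_forall_isOpen [TopologicalSpace B]
    [SeparatelyContinuousMul B] [TopologicalSpace A] {N : Set B}
    (hb : ∀ U : Set A, IsOpen U → ∀ a ∈ U, ∃ V : Set B, IsOpen V ∧ (1 : B) ∈ V ∧
      ∃ Ua : Set A, IsOpen Ua ∧ a ∈ Ua ∧
        ∀ b ∈ V, (fun u : A => b⁻¹ * (u : B) * b) '' Ua ⊆ Subtype.val '' U)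
    (hN : ∀ n ∈ N, ∀ U : Set A, IsOpen U →
      IsOpen {x : A | (x : B) ∈ (fun u : A => n * (u : B) * n⁻¹) '' U})
    (φ : A × N → A) (hφ : ∀ p : A × N, (φ p : B) = (p.2 : B)⁻¹ * (p.1 : B) * (p.2 : B)) :
    Continuous φ := by
  refine continuous_def.2 fun U hU => isOpen_prod_iff.2 fun a n hφU => ?_
  obtain ⟨V, hV, h1V, Ua, hUa, hφUa, hVU⟩ := hb U hU (φ (a, n)) hφU
  refine ⟨{x : A | (x : B) ∈ (fun u : A => (n : B) * u * (n : B)⁻¹) '' Ua},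
    (fun k : N => (n : B)⁻¹ * k) ⁻¹' V, hN n n.2 Ua hUa,
    hV.preimage (continuous_subtype_val.const_mul _), ⟨_, hφUa, by simp [hφ, mul_assoc]⟩,
    by simpa using h1V, ?_⟩
  rintro ⟨x, k⟩ ⟨⟨u, hu, hux⟩, hk⟩
  obtain ⟨z, hzU, hz⟩ := hVU _ hk ⟨u, hu, rfl⟩
  show φ (x, k) ∈ U
  convert hzU using 1
  ext
  simp only at hux hz
  rw [hφ, ← hux, hz]
  group

end

/-- Let `A` be a subgroup of a topological group `B`, carrying its own group topology `tA`
with continuous inclusion into `B`. Assume condition (b): for every `tA`-open `U ⊆ A` and each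
`a ∈ U` there are an open `V ⊆ B` with `1 ∈ V` and a `tA`-open `U_a ⊆ A` with `a ∈ U_a` such
that `b⁻¹ U_a b ⊆ U` for all `b ∈ V`. Let
`N = { b ∈ B | for every tA-open U ⊆ A, both bUb⁻¹ and b⁻¹Ub are contained in A and are open
subsets of A }`, with the subspace topology from `B`. Then `A ⊆ N`, `A` is normal in `N`, and
the map `A × N → A`, `(a, n) ↦ n⁻¹ * a * n`, is continuous. -/
theorem stmt3 {B : Type*} [Group B] [TopologicalSpace B] [IsTopologicalGroup B]
    (A : Subgroup B) (tA : TopologicalSpace A)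
    (_ : @IsTopologicalGroup A tA _)
    (hb : ∀ U : Set A, IsOpen[tA] U → ∀ a ∈ U, ∃ V : Set B, IsOpen V ∧ (1 : B) ∈ V ∧
      ∃ Ua : Set A, IsOpen[tA] Ua ∧ a ∈ Ua ∧
        ∀ b ∈ V, (fun u : A => b⁻¹ * (u : B) * b) '' Ua ⊆ Subtype.val '' U)
    (N : Set B)
    (hN : N = {b : B | ∀ U : Set A, IsOpen[tA] U →
        ((fun u : A => b * (u : B) * b⁻¹) '' U ⊆ (A : Set B) ∧
          IsOpen[tA] {x : A | (x : B) ∈ (fun u : A => b * (u : B) * b⁻¹) '' U}) ∧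
        ((fun u : A => b⁻¹ * (u : B) * b) '' U ⊆ (A : Set B) ∧
          IsOpen[tA] {x : A | (x : B) ∈ (fun u : A => b⁻¹ * (u : B) * b) '' U})}) :
    (A : Set B) ⊆ N ∧
    (∀ n ∈ N, ∀ a ∈ A, n⁻¹ * a * n ∈ A) ∧
    (∀ φ : A × N → A,
      (∀ p : A × N, (φ p : B) = (p.2 : B)⁻¹ * (p.1 : B) * (p.2 : B)) →
      Continuous[@instTopologicalSpaceProd A N tA inferInstance, tA] φ) := by
  let := tA
  subst hN
  refine ⟨fun b hb U hU => ⟨?_, ?_⟩,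
    fun n hn a ha => (hn _ isOpen_univ).2.1 ⟨⟨a, ha⟩, trivial, rfl⟩,
    A.continuous_conj_of_forall_isOpen hb fun n hn U hU => (hn U hU).1.2⟩
  · exact ⟨Subgroup.conj_image_subset hb U, Subgroup.isOpen_setOf_coe_mem_conj_image hb hU⟩
  · simpa only [inv_inv] using And.intro (Subgroup.conj_image_subset (A.inv_mem hb) U)
      (Subgroup.isOpen_setOf_coe_mem_conj_image (A.inv_mem hb) hU)
end

section
/- Let F be the free group on two generators. Suppose τ is a topology on F making (F, τ) a topological group, and suppose the conjugation map F × F → F, (a,b) ↦ b⁻¹ a b, is continuous when the first factor and the codomain carry the discrete topology and the second factor carries τ. Then τ is the discrete topology. -/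
/-!
Continuity of conjugation into a discrete group makes the centralizer of every element open,
hence so is the centralizer of the two generators. In a free group an element `g ≠ 1` commuting
with two distinct generators commutes with a letter `y` whose generator differs from that of the
first letter of `g` and whose sign is that of the last one; then `y` cancels at neither end, so the
reduced words give `y :: g = g ++ [y]`, and `y` would be the first letter of `g`. So `{1}` is
open, and a group topology with `{1}` open is discrete.
-/

open Topology

namespace FreeGroup

variable {α : Type*}

theorem commute_mk_singleton {g : FreeGroup α} {y : α × Bool} (h : Commute g (of y.1)) :
    Commute g (mk [y]) := by
  obtain ⟨c, _ | _⟩ := y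
  · simpa [of, inv_mk, invRev] using h.inv_right
  · exact h

variable [DecidableEq α]

theorem cons_toWord_eq_toWord_append {g : FreeGroup α} {y : α × Bool}
    (hc : Commute g (mk [y])) (hcons : IsReduced (y :: g.toWord))
    (happend : IsReduced (g.toWord ++ [y])) :
    y :: g.toWord = g.toWord ++ [y] := by
  have := congrArg toWord hc.eq.symm
  rwa [toWord_mul, toWord_mul, toWord_mk, IsReduced.singleton.reduce_eq, List.singleton_append,
    hcons.reduce_eq, happend.reduce_eq] at this

theorem centralizer_pair_eq_bot {a b : α} (hab : a ≠ b) :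
    Subgroup.centralizer {of a, of b} = ⊥ := by
  refine (Subgroup.eq_bot_iff_forall _).2 fun g hg => by_contra fun hg1 => ?_
  simp only [Subgroup.mem_centralizer_iff, Set.mem_insert_iff, Set.mem_singleton_iff,
    forall_eq_or_imp, forall_eq] at hg
  obtain ⟨h, t, hw⟩ := List.exists_cons_of_ne_nil (mt toWord_eq_nil_iff.mp hg1)
  obtain ⟨l, hl⟩ : ∃ l, g.toWord.getLast? = some l :=
    ⟨_, List.getLast?_eq_some_getLast (by simp [hw])⟩
  obtain ⟨c, hc, hch⟩ : ∃ c, Commute g (of c) ∧ c ≠ h.1 := by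
    by_cases hah : a = h.1
    · exact ⟨b, hg.2.symm, fun hbh => hab (hah.trans hbh.symm)⟩
    · exact ⟨a, hg.1.symm, hah⟩
  have key := cons_toWord_eq_toWord_append (y := (c, l.2)) (commute_mk_singleton hc) ?_ ?_
  · rw [hw] at key
    simp only [List.cons_append, List.cons.injEq] at key
    exact hch (congrArg Prod.fst key.1)
  · rw [hw]
    exact List.isChain_cons_cons.2 ⟨fun e => absurd e hch, hw ▸ isReduced_toWord⟩
  · refine List.isChain_append.2 ⟨isReduced_toWord, IsReduced.singleton, ?_⟩
    simp [hl]

end FreeGroup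

theorem isOpen_centralizer_of_continuous_conj {G : Type*} [Group G] (τ : TopologicalSpace G)
    (hconj : Continuous[@instTopologicalSpaceProd G G ⊥ τ, ⊥]
      (fun p : G × G => p.2⁻¹ * p.1 * p.2))
    {s : Set G} (hs : s.Finite) : IsOpen[τ] (Subgroup.centralizer s : Set G) := by
  have hcomm (a : G) : IsOpen {b : G | a * b = b * a} := by
    have hconj_a : Continuous[τ, ⊥] fun b : G => b⁻¹ * a * b :=
      @Continuous.comp _ _ _ τ (@instTopologicalSpaceProd G G ⊥ τ) ⊥ _ _ hconj
        (@Continuous.prodMk_right _ _ ⊥ τ a)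
    convert @Continuous.isOpen_preimage _ _ τ ⊥ _ hconj_a {a} trivial using 1
    ext b
    simp [mul_assoc, inv_mul_eq_iff_eq_mul]
  convert hs.isOpen_biInter fun a _ => hcomm a
  ext b
  simp [Subgroup.mem_centralizer_iff]

/-- Let `F` be the free group on two generators. If `τ` is a group topology on `F` and the
conjugation map `F × F → F`, `(a, b) ↦ b⁻¹ * a * b`, is continuous when the first factor and
the codomain carry the discrete topology and the second factor carries `τ`, then `τ` is the
discrete topology. -/
theorem stmt4 (τ : TopologicalSpace (FreeGroup Bool))
    (hτ : @IsTopologicalGroup (FreeGroup Bool) τ _)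
    (hconj : Continuous[@instTopologicalSpaceProd (FreeGroup Bool) (FreeGroup Bool) ⊥ τ, ⊥]
      (fun p : FreeGroup Bool × FreeGroup Bool => p.2⁻¹ * p.1 * p.2)) :
    τ = ⊥ := by
  have hone : IsOpen ({1} : Set (FreeGroup Bool)) := by
    simpa [FreeGroup.centralizer_pair_eq_bot Bool.false_ne_true] using
      isOpen_centralizer_of_continuous_conj τ hconj (Set.toFinite {FreeGroup.of false, .of true})
  have := discreteTopology_of_isOpen_singleton_one hone
  exact DiscreteTopology.eq_bot
end

section
/- Let X be a nonempty set equipped with a binary operation / satisfying, for all x, y, z ∈ X: (y/x)/(z/x) = y/z, x/(x/x) = x, and x/x = y/y. Then there exists a group structure on X whose identity element is e = x₀/x₀ (for any choice of x₀ ∈ X, this being independent of the choice), whose multiplication is given by x · y = x/(e/y), whose inversion is given by x⁻¹ = e/x, and which satisfies x · y⁻¹ = x/y for all x, y ∈ X. -/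
/-- The group structure on a paragroup `(X, d)`: the identity is `d x₀ x₀`, multiplication is
`x * y = d x (d e y)`, inversion is `x⁻¹ = d e x`, and `x * y⁻¹ = d x y`. -/
def IsParagroupGroupStructure {X : Type*} (d : X → X → X) (x₀ : X) (G : Group X) : Prop :=
  letI : Group X := G
  (1 : X) = d x₀ x₀ ∧
  (∀ x y : X, x * y = d x (d (d x₀ x₀) y)) ∧
  (∀ x : X, x⁻¹ = d (d x₀ x₀) x) ∧
  (∀ x y : X, x * y⁻¹ = d x y)

/-- A nonempty paragroup, i.e. a nonempty set `X` with a binary operation `d = /` satisfying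
`(y/x)/(z/x) = y/z`, `x/(x/x) = x` and `x/x = y/y`, carries a group structure with identity
`e = x₀/x₀` (independent of the choice of `x₀`), multiplication `x · y = x/(e/y)`, inversion
`x⁻¹ = e/x`, and satisfying `x · y⁻¹ = x/y`. -/
theorem stmt6 {X : Type*} [Nonempty X] (d : X → X → X)
    (h1 : ∀ x y z : X, d (d y x) (d z x) = d y z)
    (h2 : ∀ x : X, d x (d x x) = x)
    (h3 : ∀ x y : X, d x x = d y y) :
    (∀ x₀ x₁ : X, d x₀ x₀ = d x₁ x₁) ∧
    ∀ x₀ : X, ∃ G : Group X, IsParagroupGroupStructure d x₀ G := by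
  refine ⟨fun x₀ x₁ => h3 x₀ x₁, fun x₀ => ?_⟩
  set e := d x₀ x₀ with he_def
  have he : ∀ x : X, d x x = e := fun x => h3 x x₀
  have hxe : ∀ x : X, d x e = x := fun x => by rw [← he x]; exact h2 x
  have hee : ∀ a b : X, d e (d a b) = d b a := fun a b => by
    rw [← he b]; exact h1 b b a
  have hdd : ∀ x : X, d e (d e x) = x := fun x => by rw [hee e x, hxe]
  have L : ∀ a v : X, d (d a v) (d e v) = a := fun a v => by
    rw [h1 v a e, hxe]
  letI : Mul X := ⟨fun x y => d x (d e y)⟩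
  letI : One X := ⟨e⟩
  letI : Inv X := ⟨fun x => d e x⟩
  have assoc : ∀ a b c : X, (a * b) * c = a * (b * c) := fun a b c => by
    show d (d a (d e b)) (d e c) = d a (d e (d b (d e c)))
    rw [hee b (d e c)]
    calc d (d a (d e b)) (d e c)
        = d (d a (d e b)) (d (d (d e c) b) (d e b)) := by rw [L (d e c) b]
      _ = d a (d (d e c) b) := h1 (d e b) a (d (d e c) b)
  have onemul : ∀ a : X, 1 * a = a := fun a => hdd a
  have invmul : ∀ a : X, a⁻¹ * a = 1 := fun a => by
    show d (d e a) (d e a) = e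
    exact he _
  refine ⟨Group.ofLeftAxioms assoc onemul invmul, rfl, fun x y => rfl, fun x => rfl,
    fun x y => ?_⟩
  show d x (d e (d e y)) = d x y
  rw [hdd]
end

section
/- Let 𝔽 and 𝔼 be finitely complete categories and let p : 𝔽 ⥤ 𝔼 be a functor that preserves finite limits and creates pullbacks. Let v : Y → X be a monomorphism in 𝔽 that is strongly p-cartesian over p(v), and let t : X' → X be a monomorphism in 𝔽 such that p(v) = p(t) ∘ w for some morphism w : p(Y) → p(X') in 𝔼. Then there exists a morphism v' : Y' → X' in 𝔽 that is strongly p-cartesian over w; explicitly, the pullback of v along t in 𝔽 is such a morphism. -/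
open CategoryTheory CategoryTheory.Limits

/-- A commutative triangle over a mono gives a pullback square with identity. -/
lemma isPullback_id_of_mono' {C : Type*} [Category C] {A B Z : C} (g : A ⟶ B) (t : B ⟶ Z)
    [Mono t] : IsPullback (𝟙 A) g (g ≫ t) t := by
  refine IsPullback.of_isLimit' ⟨by simp⟩ ?_
  refine PullbackCone.IsLimit.mk _ (fun s => s.fst) (by simp) (fun s => ?_) (fun s l hl _ => by simpa using hl)
  rw [← cancel_mono t, Category.assoc, s.condition]

/-- Let `p : 𝔽 ⥤ 𝔼` be a finite-limit-preserving functor between finitely complete categories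
which creates pullbacks. If `v : Y ⟶ X` is a monomorphism in `𝔽` which is strongly
`p`-cartesian over `p.map v`, and `t : X' ⟶ X` is a monomorphism such that `p.map v` factors
as `w ≫ p.map t`, then there is a morphism `v' : Y' ⟶ X'` which is strongly `p`-cartesian over
`w`; explicitly, a pullback of `v` along `t` is such a morphism. -/
theorem stmt7 {𝔽 𝔼 : Type*} [Category 𝔽] [Category 𝔼]
    [HasFiniteLimits 𝔽] [HasFiniteLimits 𝔼]
    (p : 𝔽 ⥤ 𝔼) [PreservesFiniteLimits p] [CreatesLimitsOfShape WalkingCospan p]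
    {Y X X' : 𝔽} (v : Y ⟶ X) [Mono v] (t : X' ⟶ X) [Mono t]
    (hv : p.IsStronglyCartesian (p.map v) v)
    (w : p.obj Y ⟶ p.obj X') (hw : p.map v = w ≫ p.map t) :
    ∃ (Y' : 𝔽) (v' : Y' ⟶ X') (u : Y' ⟶ Y),
      IsPullback u v' v t ∧ p.IsStronglyCartesian w v' := by
  haveI := hv
  haveI : Mono (p.map t) := p.map_mono t
  -- the pullback of `v` along `t` in `𝔽`
  set Z := pullback v t
  set a : Z ⟶ Y := pullback.fst v t
  set b : Z ⟶ X' := pullback.snd v t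
  have hP : IsPullback a b v t := IsPullback.of_hasPullback v t
  have hPE : IsPullback (p.map a) (p.map b) (p.map v) (p.map t) := hP.map p
  -- `(𝟙, w)` is also a pullback of the same cospan in `𝔼`
  have hW : IsPullback (𝟙 (p.obj Y)) w (p.map v) (p.map t) := by
    have := isPullback_id_of_mono' w (p.map t)
    rwa [← hw] at this
  -- hence `p.map a` is an isomorphism
  have hpa : IsIso (p.map a) := by
    have h1 := IsPullback.isoIsPullback_hom_fst (h := hPE) (h' := hW)
    rw [Category.comp_id] at h1
    rw [← h1]; infer_instance
  -- hence `a` is an isomorphism, by reflection of pullbacks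
  have ha : IsIso a := by
    have hsq : IsPullback (p.map a) (p.map a) (𝟙 (p.obj Y)) (𝟙 (p.obj Y)) :=
      IsPullback.of_horiz_isIso ⟨by simp⟩
    rw [← p.map_id] at hsq
    have hsqF : IsPullback a a (𝟙 Y) (𝟙 Y) :=
      IsPullback.of_map p (by simp) hsq
    exact hsqF.isIso_fst_of_mono
  -- the desired morphism `m : Y ⟶ X'`
  set m : Y ⟶ X' := inv a ≫ b with hm
  have hmt : m ≫ t = v := by
    rw [hm, Category.assoc, ← hP.w, IsIso.inv_hom_id_assoc]
  have hpb : p.map b = p.map a ≫ w := by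
    rw [← cancel_mono (p.map t), Category.assoc, ← hw]
    exact hPE.w.symm
  have hpm : p.map m = w := by
    rw [hm, p.map_comp, hpb, ← Category.assoc, ← p.map_comp, IsIso.inv_hom_id, p.map_id,
      Category.id_comp]
  refine ⟨Y, m, 𝟙 Y, ?_, ?_⟩
  · have := isPullback_id_of_mono' m t
    rwa [hmt] at this
  · subst hpm
    refine ⟨?_⟩
    intro c g φ' hφ'
    haveI : p.IsHomLift ((g ≫ p.map m) ≫ p.map t) (φ' ≫ t) := inferInstance
    have huniv := Functor.IsStronglyCartesian.universal_property p (p.map v) v g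
      ((g ≫ p.map m) ≫ p.map t)
      (by rw [Category.assoc, ← hw]) (φ' ≫ t)
    obtain ⟨χ, ⟨hχ1, hχ2⟩, huniq⟩ := huniv
    refine ⟨χ, ⟨hχ1, ?_⟩, ?_⟩
    · rw [← cancel_mono t, Category.assoc, hmt, hχ2]
    · rintro χ' ⟨hχ'1, hχ'2⟩
      exact huniq χ' ⟨hχ'1, by rw [← hχ'2, Category.assoc, hmt]⟩
end
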